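/- arXiv:1408.4894 — 3 statements merged into one kernel-verified Lean document; each statement's English description precedes it below -/
import Mathlib

section
/- Let V : ℝⁿ → ℝⁿ be a continuous vector field, φ : ℝⁿ → ℝ a C¹ function, and κ : ℝⁿ → ℝ a continuous function such that the Lie derivative identity ⟨∇φ(p), V(p)⟩ = κ(p)·φ(p) holds for every p ∈ ℝⁿ. Let x : [0,T] → ℝⁿ be differentiable with x'(t) = V(x(t)) for all t ∈ [0,T]. If φ(x(0)) = 0, then φ(x(t)) = 0 for all t ∈ [0,T]; i.e. the zero level set of φ is invariant under the flow of V. -/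
/-!
Along a trajectory, `y = φ ∘ x` solves the scalar linear equation `y' = κ(x(t)) · y`, whose
coefficient is bounded on the compact time interval; by Grönwall's inequality a solution of
such an equation that starts at `0` stays at `0`.
-/

open Set
open scoped RealInnerProductSpace

theorem HasGradientAt.comp_hasDerivAt {F : Type*} [NormedAddCommGroup F] [InnerProductSpace ℝ F]
    [CompleteSpace F] {f : F → ℝ} {f' : F} {x : ℝ → F} {v : F} {t : ℝ}
    (hf : HasGradientAt f f' (x t)) (hx : HasDerivAt x v t) :
    HasDerivAt (f ∘ x) ⟪f', v⟫ t := by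
  simpa using hf.hasFDerivAt.comp_hasDerivAt t hx

theorem eq_zero_of_hasDerivWithinAt_smul_self_of_eq_zero {E : Type*} [NormedAddCommGroup E]
    [NormedSpace ℝ E] {y : ℝ → E} {k : ℝ → ℝ} {a b : ℝ}
    (hk : ContinuousOn k (Icc a b)) (hy : ContinuousOn y (Icc a b))
    (hy' : ∀ t ∈ Ico a b, HasDerivWithinAt y (k t • y t) (Ici t) t) (ha : y a = 0) :
    ∀ t ∈ Icc a b, y t = 0 := by
  obtain ⟨K, hK⟩ := isCompact_Icc.exists_bound_of_continuousOn hk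
  refine eq_zero_of_abs_deriv_le_mul_abs_self_of_eq_zero_right (K := K) hy hy' ha fun t ht => ?_
  rw [norm_smul]
  exact mul_le_mul_of_nonneg_right (hK t (Ico_subset_Icc_self ht)) (norm_nonneg _)

theorem darboux_invariance_general {n : ℕ}
    (V : EuclideanSpace ℝ (Fin n) → EuclideanSpace ℝ (Fin n))
    (φ : EuclideanSpace ℝ (Fin n) → ℝ)
    (κ : EuclideanSpace ℝ (Fin n) → ℝ)
    (hφ : ContDiff ℝ 1 φ) (hκ : Continuous κ)
    (hLie : ∀ p, ⟪gradient φ p, V p⟫ = κ p * φ p)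
    (T : ℝ) (x : ℝ → EuclideanSpace ℝ (Fin n))
    (hsol : ∀ t ∈ Set.Icc (0 : ℝ) T, HasDerivAt x (V (x t)) t)
    (h0 : φ (x 0) = 0) :
    ∀ t ∈ Set.Icc (0 : ℝ) T, φ (x t) = 0 := by
  have hx : ContinuousOn x (Icc 0 T) := fun t ht => (hsol t ht).continuousAt.continuousWithinAt
  have hφx : ∀ t ∈ Icc 0 T, HasDerivAt (φ ∘ x) (κ (x t) • (φ ∘ x) t) t := fun t ht => by
    rw [smul_eq_mul, Function.comp_apply, ← hLie]
    exact (hφ.differentiable one_ne_zero (x t)).hasGradientAt.comp_hasDerivAt (hsol t ht)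
  exact eq_zero_of_hasDerivWithinAt_smul_self_of_eq_zero (hκ.comp_continuousOn hx)
    (hφ.continuous.comp_continuousOn hx)
    (fun t ht => (hφx t (Ico_subset_Icc_self ht)).hasDerivWithinAt) h0

/-- Darboux invariance criterion: if the Lie derivative of `φ` along the vector field `V`
satisfies `L_V φ = κ · φ` for a continuous cofactor `κ`, then the zero level set of `φ`
is invariant under the flow of `V`. -/
theorem darboux_invariance {n : ℕ}
    (V : EuclideanSpace ℝ (Fin n) → EuclideanSpace ℝ (Fin n))
    (φ : EuclideanSpace ℝ (Fin n) → ℝ)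
    (κ : EuclideanSpace ℝ (Fin n) → ℝ)
    (hV : Continuous V) (hφ : ContDiff ℝ 1 φ) (hκ : Continuous κ)
    (hLie : ∀ p, ⟪gradient φ p, V p⟫ = κ p * φ p)
    (T : ℝ) (x : ℝ → EuclideanSpace ℝ (Fin n))
    (hsol : ∀ t ∈ Set.Icc (0 : ℝ) T, HasDerivAt x (V (x t)) t)
    (h0 : φ (x 0) = 0) :
    ∀ t ∈ Set.Icc (0 : ℝ) T, φ (x t) = 0 :=
  darboux_invariance_general V φ κ hφ hκ hLie T x hsol h0
end

section
/- Let F₁(x) = −1/(1 + x) for x ≠ −1, let μ₁ ∈ ℝ, and let F₂ : ℝ \ {−1, 1} → ℝ satisfy (x² − 1)·F₂(x) = μ₁ − F₁(x)·F₁'(x) for all x ∉ {−1, 1} (the order-ε² condition of the invariance equation for the Van der Pol system with μ₀ = 1). Then F₂ has a finite limit as x → 1 if and only if μ₁ = −1/8, and in that case F₂(x) = −(x² + 4x + 7)/(8(1 + x)⁴) for all x ∉ {−1, 1}. -/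
/-!
Since `F₁ F₁' = -1/(1+x)³`, the condition reads `(x² - 1) F₂(x) = μ₁ + 1/(1+x)³`. If `F₂` has a
finite limit at `1`, the left side tends to `0`, forcing `μ₁ = -1/8`. Conversely, for
`μ₁ = -1/8` the right side is `-((1+x)³ - 8)/(8(1+x)³)`, and `(1+x)³ - 8 = (x-1)(x² + 4x + 7)`
cancels the factor `x - 1` of `x² - 1`, leaving a function continuous at `1`.
-/

open Filter Topology

lemma hasDerivAt_neg_one_div_one_add {x : ℝ} (hx : x ≠ -1) :
    HasDerivAt (fun y => -1 / (1 + y)) (1 / (1 + x) ^ 2) x := by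
  have hx' : 1 + x ≠ 0 := fun h => hx (by linarith)
  have h := (((hasDerivAt_id x).const_add 1).inv hx').neg
  simp only [id, Pi.inv_def, Pi.neg_def] at h
  rw [show (fun y : ℝ => -1 / (1 + y)) = fun y => -(1 + y)⁻¹ by ext; rw [neg_div, one_div]]
  exact h.congr_deriv (by ring)

lemma eq_zero_of_tendsto_of_mul_eq {𝕜 : Type*} [NontriviallyNormedField 𝕜] {f c g : 𝕜 → 𝕜}
    {a L : 𝕜} (hf : Tendsto f (𝓝[≠] a) (𝓝 L)) (hc : ContinuousAt c a) (hca : c a = 0)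
    (hg : ContinuousAt g a) (hcfg : (fun x => c x * f x) =ᶠ[𝓝[≠] a] g) : g a = 0 := by
  have hcf : Tendsto (fun x => c x * f x) (𝓝[≠] a) (𝓝 0) := by
    simpa [hca] using (hc.tendsto.mono_left nhdsWithin_le_nhds).mul hf
  exact tendsto_nhds_unique ((hg.tendsto.mono_left nhdsWithin_le_nhds).congr' hcfg.symm) hcf

lemma eq_of_sq_sub_one_mul_eq {x y : ℝ} (hx : x ≠ -1) (hx1 : x ≠ 1)
    (h : (x ^ 2 - 1) * y = -1 / 8 + 1 / (1 + x) ^ 3) :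
    y = -(x ^ 2 + 4 * x + 7) / (8 * (1 + x) ^ 4) := by
  have hx' : 1 + x ≠ 0 := fun h => hx (by linarith)
  have hsq : x ^ 2 - 1 ≠ 0 := by
    rw [show x ^ 2 - 1 = (x - 1) * (x + 1) by ring]
    exact mul_ne_zero (sub_ne_zero.2 hx1) (fun h => hx (by linarith))
  refine mul_left_cancel₀ hsq (h.trans ?_)
  field_simp
  ring

lemma eventually_ne_neg_one_and_ne_one :
    ∀ᶠ x in 𝓝[≠] (1 : ℝ), x ≠ -1 ∧ x ≠ 1 :=
  (eventually_nhdsWithin_of_eventually_nhds (eventually_ne_nhds (by norm_num))).and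
    self_mem_nhdsWithin

/-- Order-`ε²` condition for the Van der Pol canard (with `μ₀ = 1`): if
`(x² − 1)·F₂(x) = μ₁ − F₁(x)·F₁'(x)` away from `x = ±1`, where `F₁(x) = −1/(1+x)`,
then `F₂` has a finite limit as `x → 1` iff `μ₁ = −1/8`, in which case
`F₂(x) = −(x² + 4x + 7)/(8(1+x)⁴)`. -/
theorem vdp_order_two (μ₁ : ℝ) (F₂ : ℝ → ℝ)
    (F₁ : ℝ → ℝ) (hF₁ : F₁ = fun x => -1 / (1 + x))
    (h : ∀ x : ℝ, x ≠ -1 → x ≠ 1 → (x ^ 2 - 1) * F₂ x = μ₁ - F₁ x * deriv F₁ x) :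
    ((∃ L : ℝ, Tendsto F₂ (𝓝[≠] (1 : ℝ)) (𝓝 L)) ↔ μ₁ = -1 / 8) ∧
    (μ₁ = -1 / 8 → ∀ x : ℝ, x ≠ -1 → x ≠ 1 →
      F₂ x = -(x ^ 2 + 4 * x + 7) / (8 * (1 + x) ^ 4)) := by
  subst hF₁
  have hcond : ∀ x : ℝ, x ≠ -1 → x ≠ 1 → (x ^ 2 - 1) * F₂ x = μ₁ + 1 / (1 + x) ^ 3 := by
    intro x hx hx1
    have hx' : 1 + x ≠ 0 := fun h => hx (by linarith)
    rw [h x hx hx1, (hasDerivAt_neg_one_div_one_add hx).deriv]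
    field_simp
    ring
  have hformula : μ₁ = -1 / 8 → ∀ x : ℝ, x ≠ -1 → x ≠ 1 →
      F₂ x = -(x ^ 2 + 4 * x + 7) / (8 * (1 + x) ^ 4) := by
    rintro rfl x hx hx1
    exact eq_of_sq_sub_one_mul_eq hx hx1 (hcond x hx hx1)
  refine ⟨⟨fun ⟨L, hL⟩ => ?_, fun hμ => ?_⟩, hformula⟩
  · have hzero := eq_zero_of_tendsto_of_mul_eq hL (c := fun x => x ^ 2 - 1) (by fun_prop)
      (by norm_num) (g := fun x => μ₁ + 1 / (1 + x) ^ 3) (by fun_prop (disch := norm_num))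
      (eventually_ne_neg_one_and_ne_one.mono fun x hx => hcond x hx.1 hx.2)
    norm_num at hzero
    linarith
  · have hcont : ContinuousAt (fun x : ℝ => -(x ^ 2 + 4 * x + 7) / (8 * (1 + x) ^ 4)) 1 := by
      fun_prop (disch := norm_num)
    exact ⟨_, (hcont.tendsto.mono_left nhdsWithin_le_nhds).congr'
      (eventually_ne_neg_one_and_ne_one.mono fun x hx => (hformula hμ x hx.1 hx.2).symm)⟩
end

section
/- Define, for x ≠ −1 and ε ∈ ℝ, F(x, ε) = (x³/3 − x) − ε/(1 + x) − ε²·(x² + 4x + 7)/(8(1 + x)⁴) and μ(ε) = 1 − ε/8 − 3ε²/32, and let R(x, ε) = (∂F/∂x)(x, ε)·( x + F(x, ε) − x³/3 ) − ε·( μ(ε) − x ) be the residual of the invariance equation of the Van der Pol system. Then for every compact set K ⊆ ℝ \ {−1} there exists a constant C > 0 such that |R(x, ε)| ≤ C·ε³ for all x ∈ K and all ε ∈ (0, 1]. -/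
/-- The truncated canard expansion of the Van der Pol slow invariant manifold. -/
noncomputable def vdpF (x ε : ℝ) : ℝ :=
  (x ^ 3 / 3 - x) - ε / (1 + x) - ε ^ 2 * (x ^ 2 + 4 * x + 7) / (8 * (1 + x) ^ 4)

/-- The canard value of the bifurcation parameter up to order `ε²`. -/
noncomputable def vdpμ (ε : ℝ) : ℝ := 1 - ε / 8 - 3 * ε ^ 2 / 32

/-- The residual of the invariance equation of the Van der Pol system for the
truncated canard expansion. -/
noncomputable def vdpR (x ε : ℝ) : ℝ :=
  deriv (fun x' => vdpF x' ε) x * (x + vdpF x ε - x ^ 3 / 3) - ε * (vdpμ ε - x)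

/-!
The residual is a polynomial in `ε` with coefficients rational in `x` whose only pole is
`x = -1`. Since `F₀ + εF₁ + ε²F₂` and `μ` solve the invariance equation to second order, the
coefficients of `1, ε, ε²` cancel, leaving `R(x, ε) = ε³ (R₃(x) + ε R₄(x))`. On a compact set
avoiding `-1` the continuous functions `R₃` and `R₄` are bounded, which gives the bound for
`0 < ε ≤ 1`.
-/

theorem IsCompact.exists_pos_bound_add_smul_of_continuousOn {X E : Type*} [TopologicalSpace X]
    [SeminormedAddCommGroup E] [NormedSpace ℝ E] {K : Set X} (hK : IsCompact K) {f g : X → E}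
    (hf : ContinuousOn f K) (hg : ContinuousOn g K) :
    ∃ C : ℝ, 0 < C ∧ ∀ x ∈ K, ∀ t : ℝ, |t| ≤ 1 → ‖f x + t • g x‖ ≤ C := by
  obtain ⟨A, hA⟩ := hK.exists_bound_of_continuousOn hf
  obtain ⟨B, hB⟩ := hK.exists_bound_of_continuousOn hg
  refine ⟨max (A + B) 1, by positivity, fun x hx t ht => ?_⟩
  calc ‖f x + t • g x‖ ≤ ‖f x‖ + |t| * ‖g x‖ := by
        simpa only [norm_smul, Real.norm_eq_abs] using norm_add_le (f x) (t • g x)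
    _ ≤ A + 1 * B := by gcongr; exacts [hA x hx, hB x hx]
    _ ≤ max (A + B) 1 := by rw [one_mul]; exact le_max_left _ _

theorem hasDerivAt_vdpF (ε : ℝ) {x : ℝ} (hx : 1 + x ≠ 0) :
    HasDerivAt (fun x' => vdpF x' ε)
      (x ^ 2 - 1 + ε / (1 + x) ^ 2 + ε ^ 2 * (x ^ 2 + 5 * x + 12) / (4 * (1 + x) ^ 5)) x := by
  have hlin : HasDerivAt (fun y => 1 + y) 1 x := (hasDerivAt_id x).const_add 1
  have hnum : HasDerivAt (fun y => ε ^ 2 * (y ^ 2 + 4 * y + 7)) (ε ^ 2 * (2 * x + 4)) x := by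
    simpa using ((((hasDerivAt_pow 2 x).add ((hasDerivAt_id x).const_mul 4)).add_const 7).const_mul
      (ε ^ 2))
  have hden : HasDerivAt (fun y => 8 * (1 + y) ^ 4) (8 * (4 * (1 + x) ^ 3)) x := by
    simpa using (hlin.pow 4).const_mul 8
  have hF := ((((hasDerivAt_pow 3 x).div_const 3).sub (hasDerivAt_id x)).sub
    ((hasDerivAt_const x ε).div hlin hx)).sub (hnum.div hden (by positivity))
  exact hF.congr_deriv (by field_simp; ring)

noncomputable def vdpR₃ (x : ℝ) : ℝ := 3 / 32 - (3 * x ^ 2 + 14 * x + 31) / (8 * (1 + x) ^ 6)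

noncomputable def vdpR₄ (x : ℝ) : ℝ :=
  -((x ^ 2 + 5 * x + 12) * (x ^ 2 + 4 * x + 7)) / (32 * (1 + x) ^ 9)

theorem vdpR_eq_cube_mul {x : ℝ} (hx : 1 + x ≠ 0) (ε : ℝ) :
    vdpR x ε = ε ^ 3 * (vdpR₃ x + ε * vdpR₄ x) := by
  rw [vdpR, (hasDerivAt_vdpF ε hx).deriv, vdpF, vdpμ, vdpR₃, vdpR₄]
  field_simp
  ring

theorem one_add_ne_zero_of_ne_neg_one {x : ℝ} (hx : x ≠ -1) : 1 + x ≠ 0 :=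
  fun h => hx (by linarith)

theorem continuousOn_vdpR₃ : ContinuousOn vdpR₃ {x | x ≠ -1} :=
  continuousOn_const.sub <| ContinuousOn.div (by fun_prop) (by fun_prop) fun _ hx => by
    have := one_add_ne_zero_of_ne_neg_one hx
    positivity

theorem continuousOn_vdpR₄ : ContinuousOn vdpR₄ {x | x ≠ -1} :=
  ContinuousOn.div (by fun_prop) (by fun_prop) fun _ hx => by
    have := one_add_ne_zero_of_ne_neg_one hx
    positivity

/-- On every compact set avoiding `x = −1`, the residual of the invariance equation
for the truncated canard expansion is `O(ε³)` uniformly for `ε ∈ (0, 1]`. -/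
theorem vdp_residual_cubic (K : Set ℝ) (hK : IsCompact K) (hK' : K ⊆ {x : ℝ | x ≠ -1}) :
    ∃ C : ℝ, 0 < C ∧ ∀ x ∈ K, ∀ ε ∈ Set.Ioc (0 : ℝ) 1, |vdpR x ε| ≤ C * ε ^ 3 := by
  obtain ⟨C, hC, hbound⟩ := hK.exists_pos_bound_add_smul_of_continuousOn
    (continuousOn_vdpR₃.mono hK') (continuousOn_vdpR₄.mono hK')
  refine ⟨C, hC, fun x hx ε ⟨hε₀, hε₁⟩ => ?_⟩
  rw [vdpR_eq_cube_mul (one_add_ne_zero_of_ne_neg_one (hK' hx)), abs_mul,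
    abs_of_pos (pow_pos hε₀ 3), mul_comm]
  gcongr
  exact hbound x hx ε (abs_le.2 ⟨by linarith, hε₁⟩)
end
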